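/- Let (A, R, N) be a strongly consistent AFN and ADF^FN its corresponding ADF. If X ⊆ A is strongly coherent in (A, R, N) (and thus pd-acyclic conflict-free in ADF^FN), then X^att coincides with the acyclic discarded set X^{a+} of X in ADF^FN. -/

import Mathlib

open Classical

universe u

namespace Dialectical

variable {α : Type u}

/-! ### Two-valued (partial) interpretations -/

/-- A partial two-valued interpretation: `some true` = t, `some false` = f, `none` = undefined. -/
abbrev Interp (α : Type u) := α → Option Bool

/-- The domain of an interpretation. -/
def idom (v : Interp α) : Set α := {a | v a ≠ none}

/-- The set of arguments mapped to t. -/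
def tset (v : Interp α) : Set α := {a | v a = some true}

/-- The set of arguments mapped to f. -/
def fset (v : Interp α) : Set α := {a | v a = some false}

/-- `w` is a completion of `v` to the set `Z`. -/
def Completion (v w : Interp α) (Z : Set α) : Prop :=
  idom w = Z ∧ ∀ a ∈ idom v, w a = v a

/-- The interpretation assigning t on `T` and f on `F' \ T`. -/
noncomputable def mkInterp (T F' : Set α) : Interp α :=
  fun a => if a ∈ T then some true else if a ∈ F' then some false else none

/-! ### Abstract dialectical frameworks -/

/-- An abstract dialectical framework: links and acceptance conditions
(`true` = in, `false` = out). -/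
structure ADF (α : Type u) where
  L : α → α → Prop
  C : α → Set α → Bool

namespace ADF

variable (D : ADF α)

/-- The parents of an argument. -/
def par (a : α) : Set α := {p | D.L p a}

/-- Evaluating the acceptance condition of `s` under an interpretation. -/
def evalCond (s : α) (w : Interp α) : Bool := D.C s (tset w ∩ D.par s)

/-- `s` is decisively in w.r.t. `v`. -/
def DecisivelyIn (v : Interp α) (s : α) : Prop :=
  ∀ w : Interp α, Completion v w (idom v ∪ D.par s) → D.evalCond s w = true

/-- `s` is decisively out w.r.t. `v`. -/
def DecisivelyOut (v : Interp α) (s : α) : Prop :=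
  ∀ w : Interp α, Completion v w (idom v ∪ D.par s) → D.evalCond s w = false

/-- `v` is a minimal decisively in interpretation for `s` (`v ∈ min_dec(in,s)`). -/
def MinDecIn (v : Interp α) (s : α) : Prop :=
  D.DecisivelyIn v s ∧
  ∀ w : Interp α, D.DecisivelyIn w s → tset w ⊆ tset v → fset w ⊆ fset v →
    tset w = tset v ∧ fset w = fset v

/-- `pd` is a positive dependency function on `X`. -/
def PDFun (X : Set α) (pd : α → Option (Interp α)) : Prop :=
  ∀ a ∈ X,
    (∀ v, pd a = some v → D.MinDecIn v a ∧ tset v ⊆ X) ∧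
    (pd a = none → ¬ ∃ v, D.MinDecIn v a ∧ tset v ⊆ X)

end ADF

/-- The subset of `X` on which `pd` is non-null. -/
def soundDom (X : Set α) (pd : α → Option (Interp α)) : Set α :=
  {a ∈ X | pd a ≠ none}

namespace ADF
variable (D : ADF α)

/-- `pd` is a maximally sound pd-function of `X`. -/
def MaxSound (X : Set α) (pd : α → Option (Interp α)) : Prop :=
  D.PDFun X pd ∧
  ¬ ∃ (X'' : Set α) (pd' : α → Option (Interp α)),
      D.PDFun X'' pd' ∧ (∀ a ∈ X'', pd' a ≠ none) ∧
      soundDom X pd ⊂ X'' ∧ X'' ⊆ X ∧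
      ∀ a ∈ soundDom X pd, pd' a = pd a

end ADF

/-- The t-part of the interpretation assigned by `pd` to `a`. -/
def pdT (pd : α → Option (Interp α)) (a : α) : Set α :=
  {b | ∃ v, pd a = some v ∧ b ∈ tset v}

/-- The f-part of the interpretation assigned by `pd` to `a`. -/
def pdF (pd : α → Option (Interp α)) (a : α) : Set α :=
  {b | ∃ v, pd a = some v ∧ b ∈ fset v}

namespace ADF

variable (D : ADF α)

end ADF

/-- `(Fs, G, B)` is a partially acyclic positive dependency evaluation for `x`
based on the pd-function `pd` of `X`. -/
def IsPAEvalWith (pd : α → Option (Interp α)) (X : Set α)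
    (x : α) (Fs : Set α) (G : List α) (B : Set α) : Prop :=
  (∀ a ∈ G, a ∉ Fs) ∧ G.Nodup ∧
  x ∈ X ∧ Fs ⊆ X ∧ (∀ a ∈ G, a ∈ X) ∧
  (∀ a ∈ Fs, pd a ≠ none) ∧ (∀ a ∈ G, pd a ≠ none) ∧
  (G = [] → x ∈ Fs) ∧ (G ≠ [] → G.getLast? = some x) ∧
  (∀ i : ℕ, ∀ h : i < G.length,
      pdT pd (G.get ⟨i, h⟩) ⊆
        Fs ∪ {b | ∃ j : ℕ, ∃ hj : j < G.length, j < i ∧ G.get ⟨j, hj⟩ = b}) ∧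
  (∀ a ∈ Fs, pdT pd a ⊆ Fs) ∧
  (∀ a ∈ Fs, ∃ b ∈ Fs, a ∈ pdT pd b) ∧
  B = (⋃ a ∈ Fs, pdF pd a) ∪ ⋃ a ∈ {c | c ∈ G}, pdF pd a

namespace ADF
variable (D : ADF α)

/-- `(Fs, G, B)` is a partially acyclic positive dependency evaluation for `x` on `X`. -/
def PAEval (X : Set α) (x : α) (Fs : Set α) (G : List α) (B : Set α) : Prop :=
  ∃ pd, D.MaxSound X pd ∧ IsPAEvalWith pd X x Fs G B

/-- `(G, B)` is an acyclic positive dependency evaluation for `x` on `X`. -/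
def AcyclicEval (X : Set α) (x : α) (G : List α) (B : Set α) : Prop :=
  D.PAEval X x ∅ G B

/-- The standard discarded set `X⁺`. -/
def stdDiscarded (X : Set α) : Set α :=
  {a | ∀ Fs G B, D.PAEval Set.univ a Fs G B → (B ∩ X).Nonempty}

/-- The partially acyclic discarded set `X^{p+}`. -/
def pDiscarded (X : Set α) : Set α :=
  {a | ¬ ∃ Fs G B, D.PAEval Set.univ a Fs G B ∧ Fs ⊆ X ∧ B ∩ X = ∅}

/-- The acyclic discarded set `X^{a+}`. -/
def aDiscarded (X : Set α) : Set α :=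
  {a | ∀ G B, D.AcyclicEval Set.univ a G B → (B ∩ X).Nonempty}

/-- The standard range of `X`. -/
noncomputable def stdRange (X : Set α) : Interp α := mkInterp X (D.stdDiscarded X \ X)

/-- The partially acyclic range of `X`. -/
noncomputable def pRange (X : Set α) : Interp α := mkInterp X (D.pDiscarded X \ X)

/-- The acyclic range of `X`. -/
noncomputable def aRange (X : Set α) : Interp α := mkInterp X (D.aDiscarded X \ X)

/-- Conflict-freeness in an ADF. -/
def ConflictFree (X : Set α) : Prop := ∀ s ∈ X, D.C s (X ∩ D.par s) = true

/-- pd-acyclic conflict-freeness in an ADF. -/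
def PDAcyclicCF (X : Set α) : Prop :=
  ∀ a ∈ X, ∃ G B, D.AcyclicEval X a G B ∧ B ∩ X = ∅

def CCAdmissible (X : Set α) : Prop :=
  D.ConflictFree X ∧ ∀ e ∈ X, D.DecisivelyIn (D.stdRange X) e

def CA2Admissible (X : Set α) : Prop :=
  D.ConflictFree X ∧ ∀ e ∈ X, D.DecisivelyIn (D.pRange X) e

def AAAdmissible (X : Set α) : Prop :=
  D.PDAcyclicCF X ∧ ∀ e ∈ X, D.DecisivelyIn (D.aRange X) e

def CCComplete (X : Set α) : Prop :=
  D.CCAdmissible X ∧ ∀ e, D.DecisivelyIn (D.stdRange X) e → e ∈ X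

def CA2Complete (X : Set α) : Prop :=
  D.CA2Admissible X ∧ ∀ e, D.DecisivelyIn (D.pRange X) e → e ∈ X

def AAComplete (X : Set α) : Prop :=
  D.AAAdmissible X ∧ ∀ e, D.DecisivelyIn (D.aRange X) e → e ∈ X

def CCPreferred (X : Set α) : Prop :=
  D.CCAdmissible X ∧ ∀ Y, D.CCAdmissible Y → X ⊆ Y → X = Y

def CA2Preferred (X : Set α) : Prop :=
  D.CA2Admissible X ∧ ∀ Y, D.CA2Admissible Y → X ⊆ Y → X = Y

def AAPreferred (X : Set α) : Prop :=
  D.AAAdmissible X ∧ ∀ Y, D.AAAdmissible Y → X ⊆ Y → X = Y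

/-- `X` is a model of the ADF. -/
def IsModel (X : Set α) : Prop :=
  D.ConflictFree X ∧ ∀ a, a ∉ X → D.C a (X ∩ D.par a) = false

/-- `X` is a stable extension of the ADF. -/
def IsStable (X : Set α) : Prop :=
  D.PDAcyclicCF X ∧ D.aDiscarded X = Xᶜ

/-- `X` is the grounded extension (the least cc-complete extension). -/
def IsGrounded (X : Set α) : Prop :=
  D.CCComplete X ∧ ∀ Y, D.CCComplete Y → X ⊆ Y

/-- `X` is the acyclic grounded extension (the least aa-complete extension). -/
def IsAcyclicGrounded (X : Set α) : Prop :=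
  D.AAComplete X ∧ ∀ Y, D.AAComplete Y → X ⊆ Y

/-- The link `(r,s)` is supporting. -/
def Supporting (r s : α) : Prop :=
  ¬ ∃ R' ⊆ D.par s, D.C s R' = true ∧ D.C s (R' ∪ {r}) = false

/-- The link `(r,s)` is attacking. -/
def Attacking (r s : α) : Prop :=
  ¬ ∃ R' ⊆ D.par s, D.C s R' = false ∧ D.C s (R' ∪ {r}) = true

/-- Bipolar ADFs. -/
def IsBADF : Prop := ∀ r s, D.L r s → D.Supporting r s ∨ D.Attacking r s

/-- Positive dependency acyclic ADFs (AADF⁺): every partially acyclic evaluation is acyclic. -/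
def IsAADFplus : Prop := ∀ X x Fs G B, D.PAEval X x Fs G B → Fs = ∅

end ADF

/-! ### Frameworks with sets of attacking arguments (SETAFs) -/

/-- A framework with sets of attacking arguments. -/
structure SETAF (α : Type u) where
  R : Set α → α → Prop
  nonempty_of_R : ∀ S a, R S a → S.Nonempty

namespace SETAF

variable (sf : SETAF α)

/-- `X` is conflict-free in the SETAF. -/
def ConflictFree (X : Set α) : Prop := ¬ ∃ S ⊆ X, ∃ a ∈ X, sf.R S a

/-- The discarded set of `X` in the SETAF. -/
def discarded (X : Set α) : Set α := {b | ∃ S ⊆ X, sf.R S b}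

/-- `X` defends `a` in the SETAF. -/
def Defends (X : Set α) (a : α) : Prop :=
  ∀ S, sf.R S a → ∃ s ∈ S, s ∈ sf.discarded X

def Admissible (X : Set α) : Prop := sf.ConflictFree X ∧ ∀ a ∈ X, sf.Defends X a

def Complete (X : Set α) : Prop := sf.Admissible X ∧ ∀ a, sf.Defends X a → a ∈ X

def Preferred (X : Set α) : Prop :=
  sf.Admissible X ∧ ∀ Y, sf.Admissible Y → X ⊆ Y → X = Y

/-- `X` is the grounded extension: the least complete extension. -/
def IsGrounded (X : Set α) : Prop := sf.Complete X ∧ ∀ Y, sf.Complete Y → X ⊆ Y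

def Stable (X : Set α) : Prop := sf.ConflictFree X ∧ sf.discarded X = Xᶜ

/-- The ADF corresponding to a SETAF. -/
noncomputable def toADF : ADF α where
  L x y := ∃ B : Set α, x ∈ B ∧ sf.R B y
  C a B := decide (¬ ∃ S, sf.R S a ∧ S ⊆ B)

end SETAF

/-! ### Extended argumentation frameworks with collective defense attacks (EAFCs) -/

/-- An EAFC: binary attacks `R` and collective defense attacks `D` on attacks. -/
structure EAFC (α : Type u) where
  R : α → α → Prop
  D : Set α → α → α → Prop
  nonempty_of_D : ∀ C a b, D C a b → C.Nonempty
  attack_of_D : ∀ C a b, D C a b → R a b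

namespace EAFC

variable (E : EAFC α)

/-- `a` defeats `b` w.r.t. `X`. -/
def Defeats (X : Set α) (a b : α) : Prop :=
  E.R a b ∧ ¬ ∃ C ⊆ X, E.D C a b

/-- `RS` is a reinstatement set on `X` for the defeat of `b` by `a`. -/
def Reinstatement (X : Set α) (RS : Set (α × α)) (a b : α) : Prop :=
  RS.Finite ∧
  (∀ p ∈ RS, p.1 ∈ X ∧ E.Defeats X p.1 p.2) ∧
  (a, b) ∈ RS ∧
  ∀ p ∈ RS, ∀ C : Set α, E.D C p.1 p.2 → ∃ q ∈ RS, q.2 ∈ C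

/-- The discarded set `X⁺` of `X` in the EAFC. -/
def discarded (X : Set α) : Set α :=
  {b | ∃ a ∈ X, E.Defeats X a b ∧ ∃ RS, E.Reinstatement X RS a b}

/-- `X` defends `a` in the EAFC. -/
def Defends (X : Set α) (a : α) : Prop :=
  ∀ b, E.Defeats X b a → b ∈ E.discarded X

/-- `X` is conflict-free in the EAFC. -/
def ConflictFree (X : Set α) : Prop := ¬ ∃ a ∈ X, ∃ b ∈ X, E.Defeats X a b

def Admissible (X : Set α) : Prop := E.ConflictFree X ∧ ∀ a ∈ X, E.Defends X a

def Complete (X : Set α) : Prop := E.Admissible X ∧ ∀ a, E.Defends X a → a ∈ X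

def Preferred (X : Set α) : Prop :=
  E.Admissible X ∧ ∀ Y, E.Admissible Y → X ⊆ Y → X = Y

def Stable (X : Set α) : Prop :=
  E.ConflictFree X ∧ ∀ b, b ∉ X → ∃ a ∈ X, E.Defeats X a b

/-- The characteristic function of the EAFC. -/
def charFun (X : Set α) : Set α := {a | E.Defends X a}

/-- The grounded extension of the EAFC. -/
def grounded : Set α := ⋃ i : ℕ, E.charFun^[i] ∅

/-- Every argument has finitely many attackers, every attack finitely many defense attackers. -/
def Finitary : Prop :=
  (∀ a, {b | E.R b a}.Finite) ∧ ∀ a b, {C | E.D C a b}.Finite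

/-- Strong consistency of an EAFC. -/
def StronglyConsistent : Prop :=
  ¬ ∃ (x y z : α) (X : Set α), E.R x y ∧ x ∈ X ∧ E.D X z y

/-- The EAFC is bounded hierarchical. -/
def BoundedHierarchical : Prop :=
  ∃ n : ℕ, ∃ hn : 0 < n,
    ∃ (As : Fin n → Set α) (Rs : Fin n → α → α → Prop)
      (Ds : Fin n → Set α → α → α → Prop),
      (∀ C a b, ¬ Ds ⟨n - 1, Nat.sub_lt hn one_pos⟩ C a b) ∧
      (Set.univ = ⋃ i, As i) ∧
      (∀ a b, E.R a b ↔ ∃ i, Rs i a b) ∧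
      (∀ C a b, E.D C a b ↔ ∃ i, Ds i C a b) ∧
      (∀ i a b, Rs i a b → a ∈ As i ∧ b ∈ As i) ∧
      (∀ i C a b, Ds i C a b → Rs i a b ∧
        ∃ h : (i : ℕ) + 1 < n, C ⊆ As ⟨(i : ℕ) + 1, h⟩)

/-- The ADF corresponding to a strongly consistent EAFC. -/
noncomputable def toADF : ADF α where
  L a b := E.R a b ∨ ∃ (c : α) (X : Set α), a ∈ X ∧ E.D X c b
  C a B := decide (¬ ∃ x ∈ B, E.R x a ∧ ¬ ∃ B' ⊆ B, E.D B' x a)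

end EAFC

/-! ### Argumentation frameworks with necessities (AFNs) -/

/-- An AFN: binary attacks `R` and necessity relation `N`. -/
structure AFN (α : Type u) where
  R : α → α → Prop
  N : Set α → α → Prop
  nonempty_of_N : ∀ B a, N B a → B.Nonempty

namespace AFN

variable (fn : AFN α)

/-- `G` is a powerful sequence for `a` on `X`. -/
def PowerfulSeq (X : Set α) (G : List α) (a : α) : Prop :=
  G ≠ [] ∧ (∀ b ∈ G, b ∈ X) ∧ G.getLast? = some a ∧
  ∀ i : ℕ, ∀ h : i < G.length, ∀ B : Set α, fn.N B (G.get ⟨i, h⟩) →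
    ∃ j : ℕ, ∃ hj : j < G.length, j < i ∧ G.get ⟨j, hj⟩ ∈ B

/-- `a` is powerful in `X`. -/
def Powerful (X : Set α) (a : α) : Prop :=
  a ∈ X ∧ ∃ G, fn.PowerfulSeq X G a

/-- `X` is coherent. -/
def Coherent (X : Set α) : Prop := ∀ a ∈ X, fn.Powerful X a

/-- The discarded set `X^att` of `X` in the AFN. -/
def discardedAtt (X : Set α) : Set α :=
  {a | ∀ C, fn.Coherent C → a ∈ C → ∃ c ∈ C, ∃ e ∈ X, fn.R e c}

/-- `X` is conflict-free in the AFN. -/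
def ConflictFree (X : Set α) : Prop := ¬ ∃ a ∈ X, ∃ b ∈ X, fn.R a b

/-- `X` is strongly coherent. -/
def StronglyCoherent (X : Set α) : Prop := fn.ConflictFree X ∧ fn.Coherent X

/-- The deactivated set `X⁺` of `X` in the AFN. -/
def deactivated (X : Set α) : Set α :=
  {a | (∃ e ∈ X, fn.R e a) ∨ ∃ B, fn.N B a ∧ X ∩ B = ∅}

/-- `X` defends `a` in the AFN. -/
def Defends (X : Set α) (a : α) : Prop :=
  fn.Coherent (X ∪ {a}) ∧ ∀ b, fn.R b a → b ∈ fn.discardedAtt X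

def Admissible (X : Set α) : Prop := fn.StronglyCoherent X ∧ ∀ a ∈ X, fn.Defends X a

def Complete (X : Set α) : Prop := fn.Admissible X ∧ ∀ a, fn.Defends X a → a ∈ X

def Preferred (X : Set α) : Prop :=
  fn.Admissible X ∧ ∀ Y, fn.Admissible Y → X ⊆ Y → X = Y

/-- `X` is the grounded extension: the least complete extension. -/
def IsGrounded (X : Set α) : Prop := fn.Complete X ∧ ∀ Y, fn.Complete Y → X ⊆ Y

/-- Stability via completeness and the deactivated set. -/
def Stable (X : Set α) : Prop := fn.Complete X ∧ fn.deactivated X = Xᶜ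

/-- Stability via strong coherence and the discarded set. -/
def StableAtt (X : Set α) : Prop :=
  fn.StronglyCoherent X ∧ fn.discardedAtt X = Xᶜ

/-- Strong consistency of an AFN: no argument is both supported and attacked by
the same argument. -/
def StronglyConsistent : Prop :=
  ∀ a : α, {b | ∃ B, b ∈ B ∧ fn.N B a} ∩ {b | fn.R b a} = ∅

/-- The ADF corresponding to a strongly consistent AFN. -/
noncomputable def toADF : ADF α where
  L x y := fn.R x y ∨ ∃ B, x ∈ B ∧ fn.N B y
  C a P := decide (¬ ((∃ p ∈ P, fn.R p a) ∨ ∃ Z, fn.N Z a ∧ Z ∩ P = ∅))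

end AFN

end Dialectical

/-!
In `fn.toADF` an interpretation is decisively in for `g` exactly when its true arguments meet
every necessity set of `g` and the attackers of `g` are false; by strong consistency the minimal
ones are given by the minimal sets meeting the necessities of `g`, with the attackers false.
Thus the sequence of an acyclic evaluation of `a` is a duplicate-free powerful sequence for `a`,
whose elements form a coherent set, and its blocking set contains their attackers. Conversely, a
coherent set containing `a` contains such a sequence, and choosing the minimal sets inside its
prefixes turns it into an acyclic evaluation whose blocking set consists exactly of those
attackers.
-/

theorem List.mem_take_iff_exists_get {α : Type u} {G : List α} {i : ℕ} {b : α} :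
    b ∈ G.take i ↔ ∃ j, ∃ hj : j < G.length, j < i ∧ G.get ⟨j, hj⟩ = b := by
  rw [List.mem_take_iff_getElem]
  constructor
  · rintro ⟨j, hj, rfl⟩
    exact ⟨j, by omega, by omega, rfl⟩
  · rintro ⟨j, hj, hji, rfl⟩
    exact ⟨j, by omega, rfl⟩

namespace Dialectical

section Interpretations

variable {α : Type u}

lemma tset_mkInterp (T F : Set α) : tset (mkInterp T F) = T := by
  ext x
  by_cases hT : x ∈ T <;> simp [tset, mkInterp, hT]

lemma fset_mkInterp (T F : Set α) : fset (mkInterp T F) = F \ T := by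
  ext x
  by_cases hT : x ∈ T <;> by_cases hF : x ∈ F <;> simp [fset, mkInterp, hT, hF]

lemma Completion.tset_subset {v w : Interp α} {Z : Set α} (h : Completion v w Z) :
    tset v ⊆ tset w := fun x hx => (h.2 x (by simp_all [idom, tset])).trans hx

lemma Completion.fset_subset {v w : Interp α} {Z : Set α} (h : Completion v w Z) :
    fset v ⊆ fset w := fun x hx => (h.2 x (by simp_all [idom, fset])).trans hx

noncomputable def completeWith (v : Interp α) (P S : Set α) : Interp α :=
  fun x => if v x = none ∧ x ∈ P then some (decide (x ∈ S)) else v x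

lemma completion_completeWith (v : Interp α) (P S : Set α) :
    Completion v (completeWith v P S) (idom v ∪ P) := by
  refine ⟨?_, fun x hx => ?_⟩
  · ext x
    by_cases hv : v x = none <;> by_cases hP : x ∈ P <;> simp [idom, completeWith, hv, hP]
  · simp_all [idom, completeWith]

lemma mem_tset_completeWith {v : Interp α} {P S : Set α} {x : α} :
    x ∈ tset (completeWith v P S) ↔ x ∈ tset v ∨ (v x = none ∧ x ∈ P ∧ x ∈ S) := by
  by_cases hv : v x = none <;> by_cases hP : x ∈ P <;> simp [tset, completeWith, hv, hP]

lemma pdT_of_eq_some {pd : α → Option (Interp α)} {g : α} {v : Interp α}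
    (h : pd g = some v) : pdT pd g = tset v := by
  simp [pdT, h]

lemma pdF_of_eq_some {pd : α → Option (Interp α)} {g : α} {v : Interp α}
    (h : pd g = some v) : pdF pd g = fset v := by
  simp [pdF, h]

end Interpretations

namespace ADF

variable {α : Type u} (D : ADF α)

lemma acyclicEval_iff {X : Set α} {x : α} {G : List α} {B : Set α} :
    D.AcyclicEval X x G B ↔ ∃ pd, D.MaxSound X pd ∧ G.Nodup ∧ G.getLast? = some x ∧
      (∀ g ∈ G, g ∈ X ∧ pd g ≠ none) ∧
      (∀ i (h : i < G.length), pdT pd G[i] ⊆ {b | b ∈ G.take i}) ∧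
      B = ⋃ g ∈ {c | c ∈ G}, pdF pd g := by
  have hprefix : ∀ {pd : α → Option (Interp α)} {i : ℕ} (h : i < G.length),
      pdT pd (G.get ⟨i, h⟩) ⊆ ∅ ∪ {b | ∃ j, ∃ hj : j < G.length, j < i ∧ G.get ⟨j, hj⟩ = b} ↔
        pdT pd G[i] ⊆ {b | b ∈ G.take i} := by
    simp only [Set.empty_union, List.mem_take_iff_exists_get, List.get_eq_getElem, implies_true]
  constructor
  · rintro ⟨pd, hms, -, hnd, -, -, hGX, -, hG, hnil, hlast, hpre, -, -, rfl⟩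
    have hne : G ≠ [] := fun h => (hnil h).elim
    refine ⟨pd, hms, hnd, hlast hne, fun g hg => ⟨hGX g hg, hG g hg⟩,
      fun i h => (hprefix h).1 (hpre i h), by simp⟩
  · rintro ⟨pd, hms, hnd, hlast, hG, hpre, rfl⟩
    have hx : x ∈ G := List.mem_of_getLast? hlast
    refine ⟨pd, hms, fun _ _ => id, hnd, (hG x hx).1, Set.empty_subset X,
      fun g hg => (hG g hg).1, fun _ => False.elim, fun g hg => (hG g hg).2,
      fun h => by simp [h] at hx, fun _ => hlast, fun i h => (hprefix h).2 (hpre i h),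
      fun _ => False.elim, fun _ => False.elim, by simp⟩

end ADF

namespace AFN

variable {α : Type u} (fn : AFN α)

def attackers (g : α) : Set α := {b | fn.R b g}

def MeetsNecessities (T : Set α) (g : α) : Prop := ∀ Z, fn.N Z g → (Z ∩ T).Nonempty

def IsPowerfulList (G : List α) : Prop :=
  ∀ i (h : i < G.length), fn.MeetsNecessities {b | b ∈ G.take i} G[i]

variable {fn}

lemma MeetsNecessities.mono {T T' : Set α} {g : α} (h : fn.MeetsNecessities T g)
    (hT : T ⊆ T') : fn.MeetsNecessities T' g :=
  fun Z hZ => (h Z hZ).mono (Set.inter_subset_inter_right Z hT)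

lemma powerfulSeq_iff {X : Set α} {G : List α} {a : α} :
    fn.PowerfulSeq X G a ↔
      G ≠ [] ∧ (∀ b ∈ G, b ∈ X) ∧ G.getLast? = some a ∧ fn.IsPowerfulList G := by
  have hmeets : ∀ i (h : i < G.length),
      (∀ B, fn.N B (G.get ⟨i, h⟩) → ∃ j, ∃ hj : j < G.length, j < i ∧ G.get ⟨j, hj⟩ ∈ B) ↔
        fn.MeetsNecessities {b | b ∈ G.take i} G[i] := by
    intro i h
    simp only [MeetsNecessities, Set.Nonempty, Set.mem_inter_iff, Set.mem_ofPred_eq,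
      List.mem_take_iff_exists_get, List.get_eq_getElem]
    exact forall₂_congr fun B _ =>
      ⟨fun ⟨j, hj, hji, hB⟩ => ⟨_, hB, j, hj, hji, rfl⟩,
        fun ⟨_, hB, j, hj, hji, hb⟩ => ⟨j, hj, hji, hb ▸ hB⟩⟩
  simp only [PowerfulSeq, IsPowerfulList, ← hmeets]

lemma IsPowerfulList.take {G : List α} (hG : fn.IsPowerfulList G) (n : ℕ) :
    fn.IsPowerfulList (G.take n) := by
  intro i h
  have hi : i < n := by simp at h; omega
  simpa [List.take_take, Nat.min_eq_left hi.le] using hG i (by simp at h; omega)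

lemma isPowerfulList_append_singleton {G : List α} {x : α} :
    fn.IsPowerfulList (G ++ [x]) ↔
      fn.IsPowerfulList G ∧ fn.MeetsNecessities {b | b ∈ G} x := by
  simp only [IsPowerfulList, List.length_append, List.length_singleton]
  rw [Nat.forall_lt_succ_right']
  refine and_congr (forall₂_congr fun i hi => ?_) ?_
  · rw [List.take_append_of_le_length hi.le, List.getElem_append_left hi]
  · simp [List.take_left']

lemma IsPowerfulList.exists_nodup {G : List α} (hG : fn.IsPowerfulList G) :
    ∃ G', G'.Nodup ∧ fn.IsPowerfulList G' ∧ ∀ b, b ∈ G' ↔ b ∈ G := by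
  induction G using List.reverseRecOn with
  | nil => exact ⟨[], List.nodup_nil, hG, fun _ => Iff.rfl⟩
  | append_singleton G x ih =>
    obtain ⟨hG, hx⟩ := isPowerfulList_append_singleton.mp hG
    obtain ⟨G', hnd, hG', hmem⟩ := ih hG
    by_cases hxG : x ∈ G'
    · exact ⟨G', hnd, hG', fun b => by
        simp only [List.mem_append, List.mem_singleton, hmem]
        exact ⟨Or.inl, by rintro (hb | rfl) <;> [exact hb; exact (hmem _).mp hxG]⟩⟩
    · refine ⟨G' ++ [x], ?_, ?_, fun b => by simp [hmem]⟩
      · exact List.nodup_append.mpr ⟨hnd, List.nodup_singleton x,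
          fun a ha b hb => by rintro rfl; simp_all⟩
      · exact isPowerfulList_append_singleton.mpr ⟨hG', by simpa [hmem] using hx⟩

lemma IsPowerfulList.powerfulSeq_take {G : List α} (hG : fn.IsPowerfulList G) {i : ℕ}
    (hi : i < G.length) : fn.PowerfulSeq {c | c ∈ G} (G.take (i + 1)) G[i] := by
  refine powerfulSeq_iff.mpr ⟨?_, fun b hb => List.mem_of_mem_take hb, ?_, hG.take _⟩
  · simpa [List.take_eq_nil_iff] using List.ne_nil_of_length_pos (by omega)
  · simp [List.getLast?_take, List.getElem?_eq_getElem hi]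

lemma IsPowerfulList.coherent {G : List α} (hG : fn.IsPowerfulList G) :
    fn.Coherent {c | c ∈ G} := by
  intro g hg
  obtain ⟨i, hi, rfl⟩ := List.mem_iff_getElem.mp hg
  exact ⟨hg, _, hG.powerfulSeq_take hi⟩

lemma Coherent.exists_nodup_powerfulList {C : Set α} (hC : fn.Coherent C) {a : α}
    (ha : a ∈ C) : ∃ G, G.Nodup ∧ fn.IsPowerfulList G ∧ (∀ b ∈ G, b ∈ C) ∧
      G.getLast? = some a := by
  obtain ⟨-, G, hseq⟩ := hC a ha
  obtain ⟨-, hGC, hlast, hG⟩ := powerfulSeq_iff.mp hseq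
  obtain ⟨G', hnd, hG', hmem⟩ := hG.exists_nodup
  obtain ⟨i, hi, rfl⟩ := List.mem_iff_getElem.mp ((hmem a).mpr (List.mem_of_getLast? hlast))
  obtain ⟨-, hsub, hlast', hpow⟩ := powerfulSeq_iff.mp (hG'.powerfulSeq_take hi)
  exact ⟨_, hnd.sublist (List.take_sublist _ _), hpow,
    fun b hb => hGC b ((hmem b).mp (hsub b hb)), hlast'⟩

lemma toADF_evalCond_eq_true_iff {g : α} {w : Interp α} :
    fn.toADF.evalCond g w = true ↔
      (∀ p ∈ tset w, ¬ fn.R p g) ∧ fn.MeetsNecessities (tset w) g := by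
  have hpar : ∀ Z, fn.N Z g → Z ⊆ fn.toADF.par g := fun Z hZ z hz => Or.inr ⟨Z, hz, hZ⟩
  simp only [ADF.evalCond, toADF, decide_eq_true_eq, not_or, not_exists, not_and,
    MeetsNecessities, ← Set.nonempty_iff_ne_empty]
  refine and_congr ⟨fun h p hp hR => h p ⟨hp, Or.inl hR⟩ hR, fun h p hp => h p hp.1⟩
    (forall₂_congr fun Z hZ => ?_)
  rw [← Set.inter_assoc]
  exact Iff.of_eq (congrArg Set.Nonempty
    (Set.inter_eq_left.mpr (Set.inter_subset_left.trans (hpar Z hZ))))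

lemma toADF_decisivelyIn_iff {v : Interp α} {g : α} :
    fn.toADF.DecisivelyIn v g ↔
      fn.MeetsNecessities (tset v) g ∧ fn.attackers g ⊆ fset v := by
  simp only [ADF.DecisivelyIn, toADF_evalCond_eq_true_iff]
  constructor
  · intro h
    refine ⟨?_, fun b hb => ?_⟩
    · have htset : tset (completeWith v (fn.toADF.par g) ∅) = tset v :=
        Set.ext fun x => by simp [mem_tset_completeWith]
      simpa [htset] using (h _ (completion_completeWith v (fn.toADF.par g) ∅)).2
    · by_contra hbf
      refine (h _ (completion_completeWith v (fn.toADF.par g) {b})).1 b ?_ hb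
      rcases hvb : v b with _ | _ | _
      · exact mem_tset_completeWith.mpr (Or.inr ⟨hvb, Or.inl hb, rfl⟩)
      · exact (hbf hvb).elim
      · exact mem_tset_completeWith.mpr (Or.inl hvb)
  · rintro ⟨hmeets, hatt⟩ w hw
    refine ⟨fun p hp hR => ?_, hmeets.mono hw.tset_subset⟩
    have hpf : w p = some false := hw.fset_subset (hatt hR)
    simp_all [tset]

lemma minimal_tset_of_toADF_minDecIn {v : Interp α} {g : α} (h : fn.toADF.MinDecIn v g) :
    Minimal (fn.MeetsNecessities · g) (tset v) := by
  obtain ⟨hmeets, hatt⟩ := toADF_decisivelyIn_iff.mp h.1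
  refine ⟨hmeets, fun T hT hTv => ?_⟩
  have hdisj : Disjoint T (fn.attackers g) := Set.disjoint_left.mpr fun b hbT hbatt => by
    have htrue : v b = some true := hTv hbT
    have hfalse : v b = some false := hatt hbatt
    simp [htrue] at hfalse
  have hdec : fn.toADF.DecisivelyIn (mkInterp T (fset v)) g := by
    rw [toADF_decisivelyIn_iff, tset_mkInterp, fset_mkInterp]
    exact ⟨hT, Set.subset_sdiff.mpr ⟨hatt, hdisj.symm⟩⟩
  have := (h.2 _ hdec (by rw [tset_mkInterp]; exact hTv)
    (by rw [fset_mkInterp]; exact Set.sdiff_subset)).1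
  rw [tset_mkInterp] at this
  exact this.ge

/-- By strong consistency an attacker of `g` lies in no necessity set of `g`, so it can be
removed from any set meeting them. -/
lemma disjoint_attackers_of_minimal (hcons : fn.StronglyConsistent) {T : Set α} {g : α}
    (hT : Minimal (fn.MeetsNecessities · g) T) : Disjoint T (fn.attackers g) := by
  refine Set.disjoint_left.mpr fun t htT hatt => ?_
  have hmeets : fn.MeetsNecessities (T \ {t}) g := fun Z hZ => by
    obtain ⟨s, hsZ, hsT⟩ := hT.1 Z hZ
    have hst : s ≠ t := by
      rintro rfl
      exact (Set.eq_empty_iff_forall_notMem.mp (hcons g)) s ⟨⟨Z, hsZ, hZ⟩, hatt⟩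
    exact ⟨s, hsZ, hsT, hst⟩
  exact (hT.2 hmeets Set.sdiff_subset htT).2 rfl

lemma toADF_minDecIn_mkInterp (hcons : fn.StronglyConsistent) {T : Set α} {g : α}
    (hT : Minimal (fn.MeetsNecessities · g) T) :
    fn.toADF.MinDecIn (mkInterp T (fn.attackers g)) g := by
  have hfset : fset (mkInterp T (fn.attackers g)) = fn.attackers g := by
    rw [fset_mkInterp, (disjoint_attackers_of_minimal hcons hT).symm.sdiff_eq_left]
  refine ⟨toADF_decisivelyIn_iff.mpr ⟨?_, hfset.ge⟩, fun w hw htw hfw => ?_⟩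
  · rw [tset_mkInterp]; exact hT.1
  · obtain ⟨hmeets, hatt⟩ := toADF_decisivelyIn_iff.mp hw
    rw [tset_mkInterp] at htw ⊢
    rw [hfset] at hfw ⊢
    exact ⟨hT.eq_of_le hmeets htw, hfw.antisymm hatt⟩

lemma exists_minimal_meetsNecessities_subset {S : Set α} {g : α} (hS : S.Finite)
    (h : fn.MeetsNecessities S g) : ∃ T ⊆ S, Minimal (fn.MeetsNecessities · g) T := by
  have hfin : {T | T ⊆ S ∧ fn.MeetsNecessities T g}.Finite :=
    hS.finite_subsets.subset fun _ hT => hT.1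
  obtain ⟨T, hTS, hmin⟩ := hfin.exists_le_minimal ⟨subset_rfl, h⟩
  exact ⟨T, hTS, hmin.1.2, fun T' hT' hT'T => hmin.2 ⟨hT'T.trans hTS, hT'⟩ hT'T⟩

lemma toADF_meetsNecessities_pdT {X : Set α} {pd : α → Option (Interp α)}
    (hpd : fn.toADF.PDFun X pd) {g : α} (hg : g ∈ X) (hne : pd g ≠ none) :
    fn.MeetsNecessities (pdT pd g) g ∧ fn.attackers g ⊆ pdF pd g := by
  obtain ⟨v, hv⟩ := Option.ne_none_iff_exists'.mp hne
  rw [pdT_of_eq_some hv, pdF_of_eq_some hv]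
  exact toADF_decisivelyIn_iff.mp ((hpd g hg).1 v hv).1.1

/-- An argument with no minimal set meeting its necessities has no minimal decisively-in
interpretation, so mapping exactly those arguments to `none` gives a maximally sound
pd-function. -/
lemma exists_toADF_maxSound (hcons : fn.StronglyConsistent) (D : Set α) (T : α → Set α)
    (hT : ∀ g ∈ D, Minimal (fn.MeetsNecessities · g) (T g)) :
    ∃ pd, fn.toADF.MaxSound Set.univ pd ∧
      ∀ g ∈ D, pd g ≠ none ∧ pdT pd g = T g ∧ pdF pd g = fn.attackers g := by
  have hchoice : ∀ g, ∃ T', (g ∈ D → T' = T g) ∧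
      ((∃ S, Minimal (fn.MeetsNecessities · g) S) → Minimal (fn.MeetsNecessities · g) T') := by
    intro g
    by_cases hg : g ∈ D
    · exact ⟨T g, fun _ => rfl, fun _ => hT g hg⟩
    · by_cases hex : ∃ S, Minimal (fn.MeetsNecessities · g) S
      · obtain ⟨S, hS⟩ := hex
        exact ⟨S, fun h => (hg h).elim, fun _ => hS⟩
      · exact ⟨∅, fun h => (hg h).elim, fun h => (hex h).elim⟩
  choose T' hT'D hT'min using hchoice
  let pd : α → Option (Interp α) := fun g =>
    if ∃ S, Minimal (fn.MeetsNecessities · g) S then some (mkInterp (T' g) (fn.attackers g))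
    else none
  have hpd : fn.toADF.PDFun Set.univ pd := by
    intro g _
    by_cases hex : ∃ S, Minimal (fn.MeetsNecessities · g) S
    · refine ⟨fun v hv => ?_, fun hnone => by simp [pd, hex] at hnone⟩
      simp only [pd, if_pos hex, Option.some.injEq] at hv
      subst hv
      exact ⟨toADF_minDecIn_mkInterp hcons (hT'min g hex), Set.subset_univ _⟩
    · exact ⟨fun v hv => by simp [pd, hex] at hv,
        fun _ ⟨v, hv, _⟩ => hex ⟨_, minimal_tset_of_toADF_minDecIn hv⟩⟩
  refine ⟨pd, ⟨hpd, ?_⟩, fun g hg => ?_⟩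
  · rintro ⟨X'', pd', hpd', hsound, hss, -, -⟩
    refine hss.2 fun a ha => ⟨Set.mem_univ a, ?_⟩
    obtain ⟨v, hv⟩ := Option.ne_none_iff_exists'.mp (hsound a ha)
    have hex : ∃ S, Minimal (fn.MeetsNecessities · a) S :=
      ⟨_, minimal_tset_of_toADF_minDecIn ((hpd' a ha).1 v hv).1⟩
    simp [pd, hex]
  · have hpdg : pd g = some (mkInterp (T g) (fn.attackers g)) := by
      simp [pd, hT'D g hg, show ∃ S, Minimal (fn.MeetsNecessities · g) S from ⟨_, hT g hg⟩]
    refine ⟨by simp [hpdg], by rw [pdT_of_eq_some hpdg, tset_mkInterp], ?_⟩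
    rw [pdF_of_eq_some hpdg, fset_mkInterp,
      (disjoint_attackers_of_minimal hcons (hT g hg)).symm.sdiff_eq_left]

lemma IsPowerfulList.exists_toADF_maxSound (hcons : fn.StronglyConsistent) {G : List α}
    (hnd : G.Nodup) (hG : fn.IsPowerfulList G) :
    ∃ pd, fn.toADF.MaxSound Set.univ pd ∧ ∀ i (h : i < G.length),
      pd G[i] ≠ none ∧ pdT pd G[i] ⊆ {b | b ∈ G.take i} ∧ pdF pd G[i] = fn.attackers G[i] := by
  have hmin : ∀ g ∈ G, ∃ T ⊆ {b | b ∈ G.take (G.idxOf g)},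
      Minimal (fn.MeetsNecessities · g) T := by
    intro g hg
    have hi : G.idxOf g < G.length := List.idxOf_lt_length_of_mem hg
    refine exists_minimal_meetsNecessities_subset (List.finite_toSet _) ?_
    simpa [List.getElem_idxOf hi] using hG _ hi
  choose! T hTsub hTmin using hmin
  obtain ⟨pd, hms, hpd⟩ := AFN.exists_toADF_maxSound hcons {g | g ∈ G} T hTmin
  refine ⟨pd, hms, fun i h => ?_⟩
  obtain ⟨hne, hT, hF⟩ := hpd _ (List.getElem_mem h)
  refine ⟨hne, ?_, hF⟩
  simpa [hT, hnd.idxOf_getElem] using hTsub _ (List.getElem_mem h)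

variable (fn)

lemma discardedAtt_subset_toADF_aDiscarded (X : Set α) :
    fn.discardedAtt X ⊆ fn.toADF.aDiscarded X := by
  intro a ha G B hev
  obtain ⟨pd, hms, -, hlast, hG, hpre, rfl⟩ := fn.toADF.acyclicEval_iff.mp hev
  have hspec : ∀ g ∈ G, fn.MeetsNecessities (pdT pd g) g ∧ fn.attackers g ⊆ pdF pd g :=
    fun g hg => toADF_meetsNecessities_pdT hms.1 (Set.mem_univ g) (hG g hg).2
  have hpow : fn.IsPowerfulList G := fun i h =>
    (hspec _ (List.getElem_mem h)).1.mono (hpre i h)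
  obtain ⟨c, hc, e, he, hR⟩ := ha _ hpow.coherent (List.mem_of_getLast? hlast)
  exact ⟨e, Set.mem_biUnion hc ((hspec c hc).2 hR), he⟩

lemma toADF_aDiscarded_subset_discardedAtt (hcons : fn.StronglyConsistent) (X : Set α) :
    fn.toADF.aDiscarded X ⊆ fn.discardedAtt X := by
  intro a ha C hC haC
  obtain ⟨G, hnd, hG, hGC, hlast⟩ := hC.exists_nodup_powerfulList haC
  obtain ⟨pd, hms, hpd⟩ := hG.exists_toADF_maxSound hcons hnd
  have hev : fn.toADF.AcyclicEval Set.univ a G (⋃ g ∈ {c | c ∈ G}, pdF pd g) := by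
    refine fn.toADF.acyclicEval_iff.mpr
      ⟨pd, hms, hnd, hlast, fun g hg => ⟨Set.mem_univ g, ?_⟩, fun i h => (hpd i h).2.1, rfl⟩
    obtain ⟨i, hi, rfl⟩ := List.mem_iff_getElem.mp hg
    exact (hpd i hi).1
  obtain ⟨e, he, heX⟩ := ha G _ hev
  obtain ⟨c, hc, hec⟩ := Set.mem_iUnion₂.mp he
  obtain ⟨i, hi, rfl⟩ := List.mem_iff_getElem.mp hc
  rw [(hpd i hi).2.2] at hec
  exact ⟨_, hGC _ hc, e, heX, hec⟩

end AFN

end Dialectical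

open Dialectical in
theorem afn_toADF_discarded_general
    {α : Type} (fn : AFN α) (h : fn.StronglyConsistent)
    (X : Set α) :
    fn.discardedAtt X = fn.toADF.aDiscarded X :=
  (fn.discardedAtt_subset_toADF_aDiscarded X).antisymm
    (fn.toADF_aDiscarded_subset_discardedAtt h X)

open Dialectical in
/-- for strongly coherent `X`, the AFN discarded set `X^att` coincides
with the acyclic discarded set `X^{a+}` of the corresponding ADF. -/
theorem afn_toADF_discarded
    {α : Type} [Fintype α] (fn : AFN α) (h : fn.StronglyConsistent)
    (X : Set α) (hsc : fn.StronglyCoherent X) :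
    fn.discardedAtt X = fn.toADF.aDiscarded X :=
  afn_toADF_discarded_general fn h X
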